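/- Let a : Fin n → ℝ≥0, b ≥ 0, and let v, w be knapsack solutions. Suppose Algorithm 1 (the canonical path construction) is stalled at index i: changing v i from 0 to 1 violates the inequality even after setting to 0 all coordinates j > i with v j = 1 and w j = 0. Formally, if w i = 1 and a i + ∑_{j : matched or kept coordinates as in the intermediate state} a j * x j > b even when all coordinates j > i with v j = 1, w j = 0 are zeroed, then ∑ j, a j * w j > b, contradicting w ∈ Ω. Hence the canonical path from v to w stays inside Ω. -/
import Mathlib

/-- Lemma 3 (no-stall): if at index `i` (with `v i = 0`, `w i = 1`) even after zeroing all
coordinates `j > i` with `v j = 1, w j = 0` the flip of `i` still violates the inequality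
(i.e. the intermediate state with prefix `w`, entry 1 at `i`, and suffix `min(v,w)` exceeds
`b`), then `⟨a, w⟩ > b`, contradicting the feasibility of `w`.
Hence the canonical path of Algorithm 1 stays inside the solution set. -/
theorem knapsack_no_stall (n : ℕ) (a : Fin n → ℝ) (b : ℝ)
    (ha : ∀ i, 0 ≤ a i) (hb : 0 ≤ b) (v w : Fin n → Bool) (i : Fin n)
    (hvi : v i = false) (hwi : w i = true)
    (hstall : b < ∑ j, a j *
      (if j < i then (if w j then (1 : ℝ) else 0)
       else if j = i then 1
       else (if v j && w j then (1 : ℝ) else 0))) :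
    b < ∑ j, a j * (if w j then (1 : ℝ) else 0) := by
  refine lt_of_lt_of_le hstall (Finset.sum_le_sum fun j _ => ?_)
  rcases lt_trichotomy j i with h | h | h
  · simp [h]
  · subst h; simp [hwi]
  · have h1 : ¬ j < i := not_lt.mpr h.le
    have h2 : j ≠ i := h.ne'
    simp only [h1, h2, if_false]
    cases hw : w j <;> cases hv : v j <;> simp <;> simp [ha j]
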